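/- If X is a completely normal G-space, then X is G-completely normal: whenever A, B ⊆ X are invariant sets with A ∩ closure(B) = ∅ and closure(A) ∩ B = ∅, there exist disjoint open invariant sets U ⊇ A and V ⊇ B. -/

import Mathlib

/-! Separate `A` and `B` by disjoint open sets `U ⊇ A`, `V ⊇ B` using complete normality, then
shrink `U` and `V` to their largest invariant subsets: these still contain the invariant sets
`A` and `B`, and they stay open because `G` is compact. -/

open Set MulAction

universe u v

/-- A subset `U` of a `G`-space is invariant if `g • U ⊆ U` for all `g`. -/
def GInvariant (G : Type*) {X : Type*} [SMul G X] (U : Set X) : Prop :=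
  ∀ g : G, ∀ x ∈ U, g • x ∈ U

/-- Two maps `f h : X → Y` are `G`-homotopic via an equivariant homotopy
(`G` acting trivially on the interval `[0,1] ⊆ ℝ`). -/
def GHomotopic (G : Type*) {X Y : Type*} [SMul G X] [SMul G Y]
    [TopologicalSpace X] [TopologicalSpace Y] (f h : X → Y) : Prop :=
  ∃ F : X × ℝ → Y, ContinuousOn F ((univ : Set X) ×ˢ Icc (0:ℝ) 1) ∧
    (∀ g : G, ∀ x : X, ∀ t ∈ Icc (0:ℝ) 1, F (g • x, t) = g • F (x, t)) ∧
    (∀ x, F (x, 0) = f x) ∧ (∀ x, F (x, 1) = h x)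

/-- An open invariant subset `U ⊆ X` is `G`-categorical if the inclusion of `U`
is `G`-homotopic to a `G`-map with values in a single orbit. -/
def GCategorical (G : Type*) {X : Type*} [Group G] [MulAction G X] [TopologicalSpace X]
    (U : Set X) : Prop :=
  IsOpen U ∧ GInvariant G U ∧
  ∃ (F : X × ℝ → X) (x₀ : X), ContinuousOn F (U ×ˢ Icc (0:ℝ) 1) ∧
    (∀ g : G, ∀ x ∈ U, ∀ t ∈ Icc (0:ℝ) 1, F (g • x, t) = g • F (x, t)) ∧
    (∀ x ∈ U, F (x, 0) = x) ∧ (∀ x ∈ U, F (x, 1) ∈ orbit G x₀)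

/-- Equivariant (Lusternik–Schnirelmann) category of a `G`-space: least `n` such that
`X` is covered by `n` open invariant `G`-categorical sets (`⊤` if no finite cover exists). -/
noncomputable def catG (G X : Type*) [Group G] [MulAction G X] [TopologicalSpace X] : ℕ∞ :=
  ⨅ (n : ℕ) (_ : ∃ U : Fin n → Set X, (∀ i, GCategorical G (U i)) ∧ (⋃ i, U i) = univ),
    (n : ℕ∞)

/-- `X` is `G`-orbit connected: `X` is path-connected and the fixed point set of the
stabilizer `G_x` is path-connected for every point `x` not fixed by all of `G`. -/
def GOrbitConnected (G X : Type*) [Group G] [MulAction G X] [TopologicalSpace X] : Prop :=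
  IsPathConnected (univ : Set X) ∧
  ∀ x : X, x ∉ fixedPoints G X →
    IsPathConnected {y : X | ∀ g ∈ stabilizer G x, g • y = y}

/-- `X` is `G`-normal: disjoint closed invariant sets are separated by
disjoint open invariant sets. -/
def GNormal (G X : Type*) [SMul G X] [TopologicalSpace X] : Prop :=
  ∀ A B : Set X, IsClosed A → IsClosed B → GInvariant G A → GInvariant G B → Disjoint A B →
    ∃ U V : Set X, IsOpen U ∧ IsOpen V ∧ GInvariant G U ∧ GInvariant G V ∧
      A ⊆ U ∧ B ⊆ V ∧ Disjoint U V

/-- The inclusion of an (invariant) subset `A ⊆ X` is a `G`-cofibration: it has the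
equivariant homotopy extension property with respect to all `G`-spaces. -/
def SetGCofibration (G : Type u) {X : Type v} [Group G]
    [TopologicalSpace X] [MulAction G X] (A : Set X) : Prop :=
  ∀ (Y : Type (max u v)) [TopologicalSpace Y] [MulAction G Y],
    ∀ f : X → Y, Continuous f → (∀ g : G, ∀ x : X, f (g • x) = g • f x) →
    ∀ H : X × ℝ → Y, ContinuousOn H (A ×ˢ Icc (0:ℝ) 1) →
      (∀ g : G, ∀ a ∈ A, ∀ t ∈ Icc (0:ℝ) 1, H (g • a, t) = g • H (a, t)) →
      (∀ a ∈ A, H (a, 0) = f a) →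
      ∃ Hhat : X × ℝ → Y, ContinuousOn Hhat ((univ : Set X) ×ˢ Icc (0:ℝ) 1) ∧
        (∀ g : G, ∀ x : X, ∀ t ∈ Icc (0:ℝ) 1, Hhat (g • x, t) = g • Hhat (x, t)) ∧
        (∀ a ∈ A, ∀ t ∈ Icc (0:ℝ) 1, Hhat (a, t) = H (a, t)) ∧
        (∀ x, Hhat (x, 0) = f x)

/-- `x₀` is a `G`-non-degenerate basepoint of `X`. -/
def GNonDegenerateBasepoint (G : Type u) {X : Type v} [Group G]
    [TopologicalSpace X] [MulAction G X] (x₀ : X) : Prop :=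
  x₀ ∈ fixedPoints G X ∧ SetGCofibration G ({x₀} : Set X)

/-- `U` is a `G`-categorical subset of the invariant subspace `A` of the `G`-space `Z`:
`U ⊆ A` is relatively open, invariant, and the inclusion `U → A` is `G`-homotopic
(within `A`) to a map into a single orbit. -/
def GCategoricalIn (G : Type*) {Z : Type*} [Group G] [MulAction G Z] [TopologicalSpace Z]
    (A U : Set Z) : Prop :=
  U ⊆ A ∧ (∃ O : Set Z, IsOpen O ∧ U = O ∩ A) ∧ GInvariant G U ∧
  ∃ (F : Z × ℝ → Z) (z₀ : Z), z₀ ∈ A ∧ ContinuousOn F (U ×ˢ Icc (0:ℝ) 1) ∧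
    (∀ p ∈ U ×ˢ Icc (0:ℝ) 1, F p ∈ A) ∧
    (∀ g : G, ∀ z ∈ U, ∀ t ∈ Icc (0:ℝ) 1, F (g • z, t) = g • F (z, t)) ∧
    (∀ z ∈ U, F (z, 0) = z) ∧ (∀ z ∈ U, F (z, 1) ∈ orbit G z₀)

/-- Equivariant category of an invariant subspace `A` of a `G`-space `Z`. -/
noncomputable def catGIn (G : Type*) {Z : Type*} [Group G] [MulAction G Z]
    [TopologicalSpace Z] (A : Set Z) : ℕ∞ :=
  ⨅ (n : ℕ) (_ : ∃ U : Fin n → Set Z, (∀ i, GCategoricalIn G A (U i)) ∧ A ⊆ ⋃ i, U i),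
    (n : ℕ∞)

/-- The wedge `X ∨ Y = X × {y₀} ∪ {x₀} × Y` as a subset of `X × Y`. -/
def wedgeSet {X Y : Type*} (x₀ : X) (y₀ : Y) : Set (X × Y) :=
  (univ : Set X) ×ˢ ({y₀} : Set Y) ∪ ({x₀} : Set X) ×ˢ (univ : Set Y)

def invariantCore (G : Type*) {X : Type*} [SMul G X] (U : Set X) : Set X :=
  {x | ∀ g : G, g • x ∈ U}

section invariantCore

variable {G X : Type*}

theorem GInvariant.subset_invariantCore [SMul G X] {A U : Set X} (hA : GInvariant G A)
    (hAU : A ⊆ U) : A ⊆ invariantCore G U :=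
  fun x hx g => hAU (hA g x hx)

variable [Monoid G] [MulAction G X]

theorem gInvariant_invariantCore (U : Set X) : GInvariant G (invariantCore G U) :=
  fun g _ hx h => by simpa only [smul_smul] using hx (h * g)

theorem invariantCore_subset (U : Set X) : invariantCore G U ⊆ U :=
  fun x hx => by simpa only [one_smul] using hx 1

end invariantCore

/-- The complement of the core of `U` is the projection to `X` of the closed set
`{(g, x) | g • x ∉ U}`, and projections along a compact factor are closed maps. -/
theorem isOpen_invariantCore {G X : Type*} [TopologicalSpace G] [CompactSpace G]
    [TopologicalSpace X] [SMul G X] [ContinuousSMul G X] {U : Set X} (hU : IsOpen U) :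
    IsOpen (invariantCore G U) := by
  have hcompl : (invariantCore G U)ᶜ = Prod.snd '' ((fun p : G × X => p.1 • p.2) ⁻¹' Uᶜ) := by
    ext x
    simp [invariantCore]
  rw [← isClosed_compl_iff, hcompl]
  exact isClosedMap_snd_of_compactSpace _ (hU.isClosed_compl.preimage continuous_smul)

theorem gCompletelyNormal_of_completelyNormal_general {G X : Type*} [Group G] [TopologicalSpace G]
    [CompactSpace G] [TopologicalSpace X] [CompletelyNormalSpace X]
    [MulAction G X] [ContinuousSMul G X] :
    ∀ A B : Set X, GInvariant G A → GInvariant G B →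
      A ∩ closure B = ∅ → closure A ∩ B = ∅ →
      ∃ U V : Set X, IsOpen U ∧ IsOpen V ∧ GInvariant G U ∧ GInvariant G V ∧
        A ⊆ U ∧ B ⊆ V ∧ Disjoint U V := by
  intro A B hA hB hAB hBA
  obtain ⟨U, V, hU, hV, hAU, hBV, hUV⟩ := separatedNhds_iff_disjoint.2 <|
    completely_normal (disjoint_iff_inter_eq_empty.2 hBA) (disjoint_iff_inter_eq_empty.2 hAB)
  exact ⟨invariantCore G U, invariantCore G V, isOpen_invariantCore hU, isOpen_invariantCore hV,
    gInvariant_invariantCore U, gInvariant_invariantCore V, hA.subset_invariantCore hAU,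
    hB.subset_invariantCore hBV, hUV.mono (invariantCore_subset U) (invariantCore_subset V)⟩

/-- A completely normal `G`-space is `G`-completely normal. -/
theorem gCompletelyNormal_of_completelyNormal {G X : Type*} [Group G] [TopologicalSpace G]
    [CompactSpace G] [T2Space G] [TopologicalSpace X] [T2Space X] [CompletelyNormalSpace X]
    [MulAction G X] [ContinuousSMul G X] :
    ∀ A B : Set X, GInvariant G A → GInvariant G B →
      A ∩ closure B = ∅ → closure A ∩ B = ∅ →
      ∃ U V : Set X, IsOpen U ∧ IsOpen V ∧ GInvariant G U ∧ GInvariant G V ∧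
        A ⊆ U ∧ B ⊆ V ∧ Disjoint U V :=
  gCompletelyNormal_of_completelyNormal_general
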